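/- For every w ∈ S_n, the number of occurrences of s_1 in the canonical presentation of w equals the number of occurrences of s_1 in the canonical presentation of w^{-1}; that is, del_S(w) = del_S(w^{-1}). -/

import Mathlib

open scoped Classical
open Finset

noncomputable section

/-- `sgen n i` is the adjacent transposition `s_i = (i, i+1)` (1-indexed) in `S_n`,
realized as a permutation of `Fin n` (positions `1,…,n` correspond to `0,…,n-1`). -/
def sgen (n i : ℕ) : Equiv.Perm (Fin n) :=
  if h : 1 ≤ i ∧ i < n then Equiv.swap ⟨i - 1, by omega⟩ ⟨i, h.2⟩ else 1

/-- `agen n i` is the generator `a_i = s_1 s_{i+1}` of the alternating group. -/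
def agen (n i : ℕ) : Equiv.Perm (Fin n) := sgen n 1 * sgen n (i + 1)

/-- The descending product `s_j s_{j-1} ⋯ s_k` (equal to `1` when `k = j+1`). -/
def dProd (n j k : ℕ) : Equiv.Perm (Fin n) :=
  ((List.range (j + 1 - k)).map fun t => sgen n (j - t)).prod

/-- The descending product `a_j a_{j-1} ⋯ a_k` (equal to `1` when `k = j+1`). -/
def aDProd (n j k : ℕ) : Equiv.Perm (Fin n) :=
  ((List.range (j + 1 - k)).map fun t => agen n (j - t)).prod

/-- `R^S_j = {1, s_j, s_j s_{j-1}, …, s_j s_{j-1} ⋯ s_1}`. -/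
def RS (n j : ℕ) : Set (Equiv.Perm (Fin n)) :=
  { w | ∃ k, 1 ≤ k ∧ k ≤ j + 1 ∧ w = dProd n j k }

/-- `R^S_j` as a finite set. -/
def RSfin (n j : ℕ) : Finset (Equiv.Perm (Fin n)) :=
  (Finset.range (j + 1)).image fun k => dProd n j (k + 1)

/-- `R^A_j = {1, a_j, a_j a_{j-1}, …, a_j ⋯ a_2, a_j ⋯ a_2 a_1, a_j ⋯ a_2 a_1⁻¹}`. -/
def RA (n j : ℕ) : Set (Equiv.Perm (Fin n)) :=
  { v | (∃ k, 1 ≤ k ∧ k ≤ j + 1 ∧ v = aDProd n j k) ∨ v = aDProd n j 2 * (agen n 1)⁻¹ }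

/-- The element of `R^A_j` with code `k`:
`k = 0` encodes `a_j ⋯ a_2 a_1⁻¹`, and `k ≥ 1` encodes `a_j ⋯ a_k`. -/
def elemA (n j k : ℕ) : Equiv.Perm (Fin n) :=
  if k = 0 then aDProd n j 2 * (agen n 1)⁻¹ else aDProd n j k

/-- `k : Fin (n-1) → ℕ` codes the S-canonical presentation of `w`:
the `j`-th factor is `s_{j+1} s_j ⋯ s_{k j} ∈ R^S_{j+1}` (`k j = j + 2` codes `1`). -/
def isCanonS (n : ℕ) (w : Equiv.Perm (Fin n)) (k : Fin (n - 1) → ℕ) : Prop :=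
  (∀ j : Fin (n - 1), 1 ≤ k j ∧ k j ≤ (j : ℕ) + 2) ∧
    (List.ofFn fun j : Fin (n - 1) => dProd n ((j : ℕ) + 1) (k j)).prod = w

/-- The code of the S-canonical presentation of `w` (it is unique when it exists). -/
def kvecS (n : ℕ) (w : Equiv.Perm (Fin n)) : Fin (n - 1) → ℕ :=
  if h : ∃ k, isCanonS n w k then h.choose else fun _ => 0

/-- `del_S w` : the number of occurrences of `s_1` in the S-canonical presentation of `w`
(the factor from `R^S_{j+1}` contains `s_1` exactly when its code is `1`). -/
def delS (n : ℕ) (w : Equiv.Perm (Fin n)) : ℕ :=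
  (Finset.univ.filter fun j : Fin (n - 1) => kvecS n w j = 1).card

/-- `k : Fin (m-2) → ℕ` codes the A-canonical presentation of `v ∈ A_m`:
the `j`-th factor is `elemA m (j+1) (k j) ∈ R^A_{j+1}`. -/
def isCanonA (m : ℕ) (v : Equiv.Perm (Fin m)) (k : Fin (m - 2) → ℕ) : Prop :=
  (∀ j : Fin (m - 2), k j ≤ (j : ℕ) + 2) ∧
    (List.ofFn fun j : Fin (m - 2) => elemA m ((j : ℕ) + 1) (k j)).prod = v

/-- The code of the A-canonical presentation of `v`. -/
def kvecA (m : ℕ) (v : Equiv.Perm (Fin m)) : Fin (m - 2) → ℕ :=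
  if h : ∃ k, isCanonA m v k then h.choose else fun _ => 0

/-- `del_A v` : the number of occurrences of `a_1^{±1}` in the A-canonical presentation
(codes `0` and `1` are the two factors containing `a_1^{±1}`). -/
def delA (m : ℕ) (v : Equiv.Perm (Fin m)) : ℕ :=
  (Finset.univ.filter fun j : Fin (m - 2) => kvecA m v j ≤ 1).card

/-- `ℓ_A v` : the total number of letters `a_i^{±1}` in the A-canonical presentation:
the factor of `R^A_{j+1}` with code `0` has `j+1` letters, the one with code `k ≥ 1`
has `j + 2 - k` letters. -/
def lenA (m : ℕ) (v : Equiv.Perm (Fin m)) : ℕ :=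
  ∑ j : Fin (m - 2), if kvecA m v j = 0 then (j : ℕ) + 1 else (j : ℕ) + 2 - kvecA m v j

/-- `ℓ_S w` : the number of inversions of `w`. -/
def invS {n : ℕ} (w : Equiv.Perm (Fin n)) : ℕ :=
  (Finset.univ.filter fun p : Fin n × Fin n => p.1 < p.2 ∧ w p.2 < w p.1).card

/-- The (1-indexed) descent set `Des_S(σ) = {1 ≤ i ≤ n-1 : σ(i) > σ(i+1)}`. -/
def Des1 {n : ℕ} (σ : Equiv.Perm (Fin n)) : Finset ℕ :=
  (Finset.Ico 1 n).filter fun i => ∃ h : i < n, σ ⟨i, h⟩ < σ ⟨i - 1, by omega⟩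

/-- `rmaj_{S_m}(σ) = ∑_{i ∈ Des_S(σ)} (m - i)`. -/
def rmaj1 {n : ℕ} (m : ℕ) (σ : Equiv.Perm (Fin n)) : ℕ := ∑ i ∈ Des1 σ, (m - i)

/-- `maj_S(σ) = ∑_{i ∈ Des_S(σ)} i`. -/
def maj1 {n : ℕ} (σ : Equiv.Perm (Fin n)) : ℕ := ∑ i ∈ Des1 σ, i

/-- `Del_S(σ)` : the (1-indexed) positions `1 < i ≤ n` which are left-to-right minima:
`σ(i) < σ(j)` for all `j < i`. -/
def DelSet {n : ℕ} (σ : Equiv.Perm (Fin n)) : Finset ℕ :=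
  (Finset.Icc 2 n).filter fun i =>
    ∃ h : i - 1 < n, ∀ j : Fin n, (j : ℕ) < i - 1 → σ ⟨i - 1, h⟩ < σ j

/-- `del_S(σ)` computed combinatorially: the number of left-to-right minima of `σ`
other than the first position. -/
def delC {n : ℕ} (σ : Equiv.Perm (Fin n)) : ℕ := (DelSet σ).card

/-- The Gaussian (q-)binomial coefficient, via the q-Pascal recursion. -/
def qbinom {R : Type*} [CommRing R] (q : R) : ℕ → ℕ → R
  | _, 0 => 1
  | 0, _ + 1 => 0
  | n + 1, k + 1 => qbinom q n k + q ^ (k + 1) * qbinom q n (k + 1)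

end

section Aux

theorem Equiv.Perm.apply_inv_self {α : Type*} (f : Equiv.Perm α) (x : α) : f (f⁻¹ x) = x :=
  Equiv.apply_symm_apply f x

theorem Equiv.Perm.inv_apply_self {α : Type*} (f : Equiv.Perm α) (x : α) : f⁻¹ (f x) = x :=
  Equiv.symm_apply_apply f x

private lemma dProd_one (n p : ℕ) : dProd n p (p + 1) = 1 := by
  unfold dProd; simp

private lemma dProd_succ (n ℓ k : ℕ) (h : k ≤ ℓ + 1) :
    dProd n (ℓ + 1) k = sgen n (ℓ + 1) * dProd n ℓ k := by
  unfold dProd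
  have h2 : ℓ + 1 + 1 - k = (ℓ + 1 - k) + 1 := by omega
  rw [h2, List.range_succ_eq_map, List.map_cons, List.prod_cons, List.map_map]
  have hmap : List.map ((fun t => sgen n (ℓ + 1 - t)) ∘ Nat.succ) (List.range (ℓ + 1 - k))
      = List.map (fun t => sgen n (ℓ - t)) (List.range (ℓ + 1 - k)) :=
    List.map_congr_left (fun t _ => by simp only [Function.comp]; congr 1; omega)
  rw [hmap, Nat.sub_zero]

private lemma dProd_apply (n p d : ℕ) (h : p + d < n) (x : Fin n) :
    dProd n (p + d) (p + 1) x =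
      if (x : ℕ) = p then ⟨p + d, h⟩
      else if p + 1 ≤ (x : ℕ) ∧ (x : ℕ) ≤ p + d then
        ⟨(x : ℕ) - 1, lt_of_le_of_lt (Nat.sub_le _ _) x.isLt⟩
      else x := by
  induction d generalizing x with
  | zero =>
    have h1 : dProd n (p + 0) (p + 1) = 1 := dProd_one n p
    rw [h1]
    simp only [Equiv.Perm.one_apply]
    by_cases hx : (x : ℕ) = p
    · rw [if_pos hx]; exact Fin.ext (by simpa using hx)
    · rw [if_neg hx, if_neg (by omega)]
  | succ d ih =>
    have hpd : p + d < n := by omega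
    have hd : dProd n (p + (d + 1)) (p + 1) = sgen n (p + d + 1) * dProd n (p + d) (p + 1) :=
      dProd_succ n (p + d) (p + 1) (by omega)
    rw [hd, Equiv.Perm.mul_apply, ih hpd]
    have hs : sgen n (p + d + 1) =
        Equiv.swap ⟨p + d, by omega⟩ ⟨p + d + 1, by omega⟩ := by
      rw [sgen, dif_pos ⟨by omega, by omega⟩]
      congr 1
    rw [hs]
    split_ifs with hx hx2 hx3 hx3
    · rw [Equiv.swap_apply_left]; exact Fin.ext rfl
    · exact Equiv.swap_apply_of_ne_of_ne
        (fun hc => by have h' : (x : ℕ) - 1 = p + d := congrArg Fin.val hc; omega)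
        (fun hc => by have h' : (x : ℕ) - 1 = p + d + 1 := congrArg Fin.val hc; omega)
    · exact absurd ⟨hx2.1, by omega⟩ hx3
    · have hxe : x = (⟨p + d + 1, by omega⟩ : Fin n) := Fin.ext (show (x : ℕ) = p + d + 1 by omega)
      rw [hxe, Equiv.swap_apply_right]
      exact Fin.ext rfl
    · exact Equiv.swap_apply_of_ne_of_ne
        (fun hc => by have h' : (x : ℕ) = p + d := congrArg Fin.val hc; omega)
        (fun hc => by have h' : (x : ℕ) = p + d + 1 := congrArg Fin.val hc; omega)

private lemma exists_code (n : ℕ) :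
    ∀ m, ∀ _hm : m + 1 ≤ n, ∀ w : Equiv.Perm (Fin n),
      (∀ x : Fin n, m < (x : ℕ) → w x = x) →
      ∃ k : Fin m → ℕ,
        (∀ j : Fin m, 1 ≤ k j ∧ k j ≤ (j : ℕ) + 2) ∧
        (List.ofFn fun j : Fin m => dProd n ((j : ℕ) + 1) (k j)).prod = w ∧
        ∀ j : Fin m, (k j = 1 ↔
          ∀ v : Fin n, (v : ℕ) < (j : ℕ) + 1 →
            ((w⁻¹ ⟨(j : ℕ) + 1, by have := j.isLt; omega⟩ : Fin n) : ℕ) < (w⁻¹ v : ℕ)) := by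
  intro m
  induction m with
  | zero =>
    intro hm w hw
    have hw1 : ∀ x : Fin n, w x = x := by
      intro x
      rcases Nat.eq_zero_or_pos (x : ℕ) with h | h
      · by_contra hne
        have hy0 : 0 < (w x : ℕ) := by
          rcases Nat.eq_zero_or_pos (w x : ℕ) with h2 | h2
          · exact absurd (Fin.ext (h2.trans h.symm)) hne
          · exact h2
        have h3 : w (w x) = w x := hw (w x) hy0
        exact hne (w.injective h3)
      · exact hw x h
    refine ⟨fun _ => 1, fun j => j.elim0, ?_, fun j => j.elim0⟩
    have hwe : w = 1 := Equiv.ext fun x => hw1 x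
    simp [hwe]
  | succ m ih =>
    intro hm w hw
    have hLlt : m + 1 < n := by omega
    set L : Fin n := ⟨m + 1, hLlt⟩ with hLdef
    set P : Fin n := w⁻¹ L with hPdef
    have hwP : w P = L := Equiv.Perm.apply_inv_self w L
    have hLval : (L : ℕ) = m + 1 := rfl
    have hple : (P : ℕ) ≤ m + 1 := by
      by_contra hc
      have h1 : w P = P := hw P (by omega)
      rw [hwP] at h1
      have h2 := congrArg Fin.val h1
      rw [hLval] at h2
      omega
    have hbound : ∀ u : Fin n, (u : ℕ) < m + 1 → (w⁻¹ u : ℕ) ≤ m + 1 ∧ w⁻¹ u ≠ P := by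
      intro u hu
      constructor
      · by_contra hc
        push_neg at hc
        have h1 : w (w⁻¹ u) = w⁻¹ u := hw (w⁻¹ u) (by omega)
        rw [Equiv.Perm.apply_inv_self] at h1
        have h2 := congrArg Fin.val h1
        omega
      · intro hc
        have h1 : u = L := by rw [← hwP, ← hc, Equiv.Perm.apply_inv_self]
        rw [h1, hLval] at hu
        omega
    obtain ⟨d, hd⟩ : ∃ d, m + 1 = (P : ℕ) + d := ⟨m + 1 - (P : ℕ), by omega⟩
    set f := dProd n ((P : ℕ) + d) ((P : ℕ) + 1) with hfdef
    have hfx : ∀ x : Fin n, f x =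
        if (x : ℕ) = (P : ℕ) then ⟨(P : ℕ) + d, by omega⟩
        else if (P : ℕ) + 1 ≤ (x : ℕ) ∧ (x : ℕ) ≤ (P : ℕ) + d then
          ⟨(x : ℕ) - 1, lt_of_le_of_lt (Nat.sub_le _ _) x.isLt⟩
        else x := fun x => dProd_apply n (P : ℕ) d (by omega) x
    have hfP : f P = L := by
      rw [hfx P, if_pos rfl]
      exact Fin.ext (show (P : ℕ) + d = (L : ℕ) by rw [hLval]; omega)
    have hfix : ∀ x : Fin n, m + 1 < (x : ℕ) → f x = x := by
      intro x hx
      rw [hfx x, if_neg (by omega), if_neg (by omega)]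
    have hmono : ∀ a b : Fin n, (a : ℕ) ≤ m + 1 → (b : ℕ) ≤ m + 1 → a ≠ P → b ≠ P →
        ((a : ℕ) < (b : ℕ) ↔ (f a : ℕ) < (f b : ℕ)) := by
      intro a b ha hb haP hbP
      have haP' : (a : ℕ) ≠ (P : ℕ) := fun h => haP (Fin.ext h)
      have hbP' : (b : ℕ) ≠ (P : ℕ) := fun h => hbP (Fin.ext h)
      have hva : (f a : ℕ) =
          (if (P : ℕ) + 1 ≤ (a : ℕ) ∧ (a : ℕ) ≤ (P : ℕ) + d then (a : ℕ) - 1 else (a : ℕ)) := by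
        rw [hfx a, if_neg haP']
        split_ifs with h1
        · rfl
        · rfl
      have hvb : (f b : ℕ) =
          (if (P : ℕ) + 1 ≤ (b : ℕ) ∧ (b : ℕ) ≤ (P : ℕ) + d then (b : ℕ) - 1 else (b : ℕ)) := by
        rw [hfx b, if_neg hbP']
        split_ifs with h1
        · rfl
        · rfl
      split_ifs at hva hvb <;> omega
    set w' := w * f⁻¹ with hw'def
    have hw'inv : ∀ u : Fin n, w'⁻¹ u = f (w⁻¹ u) := by
      intro u
      rw [hw'def, mul_inv_rev, inv_inv, Equiv.Perm.mul_apply]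
    have hw'fix : ∀ x : Fin n, m < (x : ℕ) → w' x = x := by
      intro x hx
      rcases Nat.lt_or_ge (m + 1) (x : ℕ) with h | h
      · have h1 : f x = x := hfix x h
        have h2 : f⁻¹ x = x := by
          conv_lhs => rw [← h1]
          exact Equiv.Perm.inv_apply_self f x
        rw [hw'def, Equiv.Perm.mul_apply, h2]
        exact hw x h
      · have hxL : x = L := Fin.ext (by rw [hLval]; omega)
        have h2 : f⁻¹ L = P := by
          conv_lhs => rw [← hfP]
          exact Equiv.Perm.inv_apply_self f P
        rw [hw'def, Equiv.Perm.mul_apply, hxL, h2, hwP]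
    obtain ⟨k', hb', hp', hiff'⟩ := ih (by omega) w' hw'fix
    refine ⟨Fin.snoc k' ((P : ℕ) + 1), ?_, ?_, ?_⟩
    · intro j
      induction j using Fin.lastCases with
      | last =>
        rw [Fin.snoc_last]
        refine ⟨by omega, ?_⟩
        simp only [Fin.val_last]
        omega
      | cast i =>
        rw [Fin.snoc_castSucc]
        simp only [Fin.coe_castSucc]
        exact hb' i
    · rw [List.ofFn_succ', List.concat_eq_append, List.prod_append, List.prod_cons,
        List.prod_nil, mul_one]
      simp only [Fin.snoc_last, Fin.snoc_castSucc, Fin.coe_castSucc, Fin.val_last]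
      rw [hp']
      have hfeq : dProd n (m + 1) ((P : ℕ) + 1) = f := by
        rw [hd]
      rw [hfeq, hw'def]
      exact inv_mul_cancel_right w f
    · intro j
      induction j using Fin.lastCases with
      | last =>
        rw [Fin.snoc_last]
        show (P : ℕ) + 1 = 1 ↔
          ∀ v : Fin n, (v : ℕ) < m + 1 → ((w⁻¹ L : Fin n) : ℕ) < (w⁻¹ v : ℕ)
        rw [← hPdef]
        constructor
        · intro h1 v hv
          have hP0 : (P : ℕ) = 0 := by omega
          have hne : (w⁻¹ v : ℕ) ≠ (P : ℕ) :=
            fun h => (hbound v hv).2 (Fin.ext h)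
          omega
        · intro h2
          by_contra h3
          have hz : (0 : ℕ) < n := by omega
          set z : Fin n := ⟨0, hz⟩ with hzdef
          have h4 : (w z : ℕ) ≠ m + 1 := by
            intro hc
            have h5 : w z = L := Fin.ext (by rw [hLval]; exact hc)
            have h6 : z = P := by rw [hPdef, ← h5, Equiv.Perm.inv_apply_self]
            have h7 : (z : ℕ) = (P : ℕ) := congrArg Fin.val h6
            have h8 : (z : ℕ) = 0 := rfl
            omega
          have h6 : (w z : ℕ) < m + 1 := by
            by_contra hc
            push_neg at hc
            have h7 : w (w z) = w z := hw (w z) (by omega)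
            have h8 := congrArg Fin.val (w.injective h7)
            have h9 : (z : ℕ) = 0 := rfl
            omega
          have h7 := h2 (w z) h6
          have h8 : (w⁻¹ (w z) : ℕ) = 0 := congrArg Fin.val (w.inv_apply_self z)
          omega
      | cast i =>
        rw [Fin.snoc_castSucc]
        simp only [Fin.coe_castSucc]
        rw [hiff' i]
        have hilt : (i : ℕ) + 1 < m + 1 := by have := i.isLt; omega
        constructor
        · intro hyp v hv
          have h1 := hyp v hv
          rw [hw'inv, hw'inv] at h1
          have hA := hbound ⟨(i : ℕ) + 1, by omega⟩ (show (i : ℕ) + 1 < m + 1 from hilt)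
          have hB := hbound v (by omega)
          exact (hmono _ _ hA.1 hB.1 hA.2 hB.2).mpr h1
        · intro hyp v hv
          have h1 := hyp v hv
          rw [hw'inv, hw'inv]
          have hA := hbound ⟨(i : ℕ) + 1, by omega⟩ (show (i : ℕ) + 1 < m + 1 from hilt)
          have hB := hbound v (by omega)
          exact (hmono _ _ hA.1 hB.1 hA.2 hB.2).mp h1

private lemma prod_fact (m : ℕ) : (∏ j : Fin m, ((j : ℕ) + 2)) = (m + 1).factorial := by
  induction m with
  | zero => simp
  | succ m ih =>
    rw [Fin.prod_univ_castSucc]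
    simp only [Fin.coe_castSucc, Fin.val_last, ih, Nat.factorial_succ (m + 1)]
    ring

private def PhiC (n : ℕ) (c : ∀ j : Fin (n - 1), Fin ((j : ℕ) + 2)) : Equiv.Perm (Fin n) :=
  (List.ofFn fun j : Fin (n - 1) => dProd n ((j : ℕ) + 1) ((c j : ℕ) + 1)).prod

private lemma PhiC_eq (n : ℕ) (k : Fin (n - 1) → ℕ)
    (hb : ∀ j : Fin (n - 1), 1 ≤ k j ∧ k j ≤ (j : ℕ) + 2) :
    PhiC n (fun j => ⟨k j - 1, by have := (hb j).1; have := (hb j).2; omega⟩)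
      = (List.ofFn fun j : Fin (n - 1) => dProd n ((j : ℕ) + 1) (k j)).prod := by
  refine congrArg List.prod (congrArg List.ofFn (funext fun j => ?_))
  congr 1
  show k j - 1 + 1 = k j
  have := (hb j).1
  omega

private lemma PhiC_bij (n : ℕ) (hn : 1 ≤ n) : Function.Bijective (PhiC n) := by
  have hsurj : Function.Surjective (PhiC n) := by
    intro w'
    obtain ⟨k, hb, hp, -⟩ := exists_code n (n - 1) (by omega) w'
      (fun x hx => absurd x.isLt (by omega))
    exact ⟨fun j => ⟨k j - 1, by have := (hb j).1; have := (hb j).2; omega⟩,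
      (PhiC_eq n k hb).trans hp⟩
  have hcard : Fintype.card (∀ j : Fin (n - 1), Fin ((j : ℕ) + 2))
      = Fintype.card (Equiv.Perm (Fin n)) := by
    rw [Fintype.card_pi, Fintype.card_perm, Fintype.card_fin]
    simp only [Fintype.card_fin]
    rw [prod_fact]
    exact congrArg Nat.factorial (by omega)
  exact (Fintype.bijective_iff_surjective_and_card (PhiC n)).2 ⟨hsurj, hcard⟩

private lemma canon_unique (n : ℕ) (hn : 1 ≤ n) (w : Equiv.Perm (Fin n))
    (k1 k2 : Fin (n - 1) → ℕ) (h1 : isCanonS n w k1) (h2 : isCanonS n w k2) : k1 = k2 := by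
  have e1 : PhiC n (fun j => ⟨k1 j - 1, by have := (h1.1 j).1; have := (h1.1 j).2; omega⟩) = w :=
    (PhiC_eq n k1 h1.1).trans h1.2
  have e2 : PhiC n (fun j => ⟨k2 j - 1, by have := (h2.1 j).1; have := (h2.1 j).2; omega⟩) = w :=
    (PhiC_eq n k2 h2.1).trans h2.2
  have e3 := (PhiC_bij n hn).1 (e1.trans e2.symm)
  funext j
  have e4 : k1 j - 1 = k2 j - 1 := congrArg Fin.val (congrFun e3 j)
  have := (h1.1 j).1
  have := (h2.1 j).1
  omega

private lemma delS_eq (n : ℕ) (hn : 1 ≤ n) (w : Equiv.Perm (Fin n)) :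
    delS n w = (Finset.univ.filter fun j : Fin (n - 1) =>
      ∀ v : Fin n, (v : ℕ) < (j : ℕ) + 1 →
        ((w⁻¹ ⟨(j : ℕ) + 1, by have := j.isLt; omega⟩ : Fin n) : ℕ) < (w⁻¹ v : ℕ)).card := by
  obtain ⟨k, hb, hp, hiff⟩ := exists_code n (n - 1) (by omega) w
    (fun x hx => absurd x.isLt (by omega))
  have hc : isCanonS n w k := ⟨hb, hp⟩
  have hex : ∃ k, isCanonS n w k := ⟨k, hc⟩
  have hk : kvecS n w = k := by
    rw [kvecS, dif_pos hex]
    exact canon_unique n hn w _ k hex.choose_spec hc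
  rw [delS, hk]
  congr 1
  refine Finset.filter_congr fun j _ => ?_
  exact hiff j

/-- Left-to-right minima positions (including position 0). -/
private def Mset {n : ℕ} (σ : Equiv.Perm (Fin n)) : Finset (Fin n) :=
  Finset.univ.filter fun i => ∀ v : Fin n, (v : ℕ) < (i : ℕ) → (σ i : ℕ) < (σ v : ℕ)

private lemma mem_Mset_inv {n : ℕ} (σ : Equiv.Perm (Fin n)) (i : Fin n)
    (h : i ∈ Mset σ) : σ i ∈ Mset σ⁻¹ := by
  rw [Mset, Finset.mem_filter] at h ⊢
  refine ⟨Finset.mem_univ _, fun v hv => ?_⟩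
  rw [Equiv.Perm.inv_apply_self]
  set j := σ⁻¹ v with hj
  have hvj : σ j = v := Equiv.Perm.apply_inv_self σ v
  rcases lt_trichotomy ((j : ℕ)) ((i : ℕ)) with hlt | heq | hgt
  · exact absurd (h.2 j hlt) (by rw [hvj]; omega)
  · exact absurd (congrArg σ (Fin.ext heq : j = i)) (by rw [hvj]; intro hc; omega)
  · exact hgt

private lemma Mset_card_symm {n : ℕ} (σ : Equiv.Perm (Fin n)) :
    (Mset σ).card = (Mset σ⁻¹).card := by
  refine Finset.card_bij (fun i _ => σ i) (fun i hi => mem_Mset_inv σ i hi)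
    (fun a _ b _ hab => σ.injective hab) (fun b hb => ?_)
  refine ⟨σ⁻¹ b, ?_, Equiv.Perm.apply_inv_self σ b⟩
  have := mem_Mset_inv σ⁻¹ b hb
  rwa [inv_inv] at this

private lemma zero_mem_Mset {n : ℕ} (hn : 1 ≤ n) (σ : Equiv.Perm (Fin n)) :
    (⟨0, by omega⟩ : Fin n) ∈ Mset σ := by
  rw [Mset, Finset.mem_filter]
  exact ⟨Finset.mem_univ _, fun v hv => by simp at hv⟩

private lemma B_card {n : ℕ} (hn : 1 ≤ n) (σ : Equiv.Perm (Fin n)) :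
    (Finset.univ.filter fun j : Fin (n - 1) =>
      ∀ v : Fin n, (v : ℕ) < (j : ℕ) + 1 →
        ((σ ⟨(j : ℕ) + 1, by have := j.isLt; omega⟩ : Fin n) : ℕ) < (σ v : ℕ)).card
      = (Mset σ).card - 1 := by
  have h1 : (Finset.univ.filter fun j : Fin (n - 1) =>
      ∀ v : Fin n, (v : ℕ) < (j : ℕ) + 1 →
        ((σ ⟨(j : ℕ) + 1, by have := j.isLt; omega⟩ : Fin n) : ℕ) < (σ v : ℕ)).card
      = ((Mset σ).erase ⟨0, by omega⟩).card := by
    refine Finset.card_bij (fun j _ => ⟨(j : ℕ) + 1, by have := j.isLt; omega⟩)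
      (fun j hj => ?_) (fun a _ b _ hab => ?_) (fun i hi => ?_)
    · rw [Finset.mem_filter] at hj
      rw [Finset.mem_erase]
      constructor
      · intro hc; have := congrArg Fin.val hc; simp at this
      · rw [Mset, Finset.mem_filter]
        exact ⟨Finset.mem_univ _, fun v hv => hj.2 v hv⟩
    · have := congrArg Fin.val hab; simp only at this
      exact Fin.ext (by omega)
    · rw [Finset.mem_erase] at hi
      have hi0 : 1 ≤ (i : ℕ) := by
        rcases Nat.eq_zero_or_pos (i : ℕ) with h0 | h0
        · exact absurd (Fin.ext h0) hi.1
        · exact h0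
      refine ⟨⟨(i : ℕ) - 1, by have := i.isLt; omega⟩, ?_, Fin.ext (by simp; omega)⟩
      rw [Finset.mem_filter]
      refine ⟨Finset.mem_univ _, fun v hv => ?_⟩
      have hmem := hi.2
      rw [Mset, Finset.mem_filter] at hmem
      have heq : (⟨(i : ℕ) - 1 + 1, by have := i.isLt; omega⟩ : Fin n) = i :=
        Fin.ext (by simp; omega)
      rw [heq]
      have hv' : (v : ℕ) < (i : ℕ) - 1 + 1 := by simpa using hv
      exact hmem.2 v (by omega)
  rw [h1, Finset.card_erase_of_mem (zero_mem_Mset hn σ)]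

end Aux

/-- `del_S(w) = del_S(w⁻¹)`. -/
theorem stmt5 (n : ℕ) (w : Equiv.Perm (Fin n)) : delS n w = delS n w⁻¹ := by
  rcases n with _ | n
  · have h : (Finset.univ : Finset (Fin (0 - 1))) = ∅ := rfl
    rw [delS, delS, h]; simp
  rcases n with _ | n
  · have h : (Finset.univ : Finset (Fin (1 - 1))) = ∅ := rfl
    rw [delS, delS, h]; simp
  have hn : 1 ≤ n + 2 := by omega
  rw [delS_eq _ hn w, delS_eq _ hn w⁻¹, B_card hn w⁻¹, B_card hn w⁻¹⁻¹, inv_inv,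
    Mset_card_symm w]
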